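/- arXiv:1107.4617 — 3 statements merged into one kernel-verified Lean document; each statement's English description precedes it below -/
import Mathlib

section
/- There is no nonzero smooth function φ : ℝ → ℝ that is simultaneously shiftable (of some finite order), symmetric (φ(−x) = φ(x)), non-negative, and unimodal on all of ℝ (non-increasing on [0, ∞)) with φ(x) → 0 as x → ∞. In particular, no valid kernel on the entire real line is shiftable. -/
open Polynomial Filter

/-- The shift operator on two-sided complex sequences. -/
noncomputable def shOp : Module.End ℂ (ℤ → ℂ) where
  toFun u := fun m => u (m + 1)
  map_add' _ _ := rfl
  map_smul' _ _ := rfl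

lemma shOp_pow (n : ℕ) (u : ℤ → ℂ) (m : ℤ) : ((shOp ^ n) u) m = u (m + n) := by
  induction n generalizing u m with
  | zero => simp
  | succ k ih =>
    have : (shOp ^ (k+1)) u = (shOp ^ k) (shOp u) := by
      rw [pow_succ, Module.End.mul_apply]
    rw [this, ih]
    show u (m + k + 1) = u (m + (k+1))
    ring_nf

/-- A two-sided complex sequence annihilated by a nonzero polynomial in the
shift operator, decaying at both ±∞, is zero. -/
lemma seq_zero_of_recurrence : ∀ (n : ℕ) (p : Polynomial ℂ), p.natDegree = n → p ≠ 0 →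
    ∀ u : ℤ → ℂ, (Polynomial.aeval shOp p) u = 0 →
    Tendsto u atTop (nhds 0) → Tendsto u atBot (nhds 0) → u = 0 := by
  intro n
  induction n using Nat.strong_induction_on with
  | _ n ih =>
    intro p hdeg hp u hrec htop hbot
    rcases Nat.eq_zero_or_pos n with hn | hn
    · -- constant polynomial case
      subst hn
      have hpc := Polynomial.eq_C_of_natDegree_eq_zero hdeg
      have hc : p.coeff 0 ≠ 0 := by
        intro h; apply hp; rw [hpc, h, map_zero]
      rw [hpc, Polynomial.aeval_C] at hrec
      have : p.coeff 0 • u = 0 := by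
        rw [← hrec]; exact (Module.algebraMap_end_apply ℂ ℂ (ℤ → ℂ) _ u).symm
      rcases smul_eq_zero.mp this with h | h
      · exact absurd h hc
      · exact h
    · -- positive degree: factor a root
      have hdegpos : 0 < p.degree := Polynomial.natDegree_pos_iff_degree_pos.mp (hdeg ▸ hn)
      obtain ⟨lam, hlam⟩ := Complex.exists_root hdegpos
      obtain ⟨q, hq⟩ := (Polynomial.dvd_iff_isRoot.mpr hlam)
      have hq0 : q ≠ 0 := by
        intro h; apply hp; rw [hq, h, mul_zero]
      have hdq : q.natDegree = n - 1 := by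
        have := Polynomial.natDegree_mul (Polynomial.X_sub_C_ne_zero lam) hq0
        rw [← hq, hdeg, Polynomial.natDegree_X_sub_C] at this
        omega
      set v : ℤ → ℂ := (Polynomial.aeval shOp (X - C lam)) u with hv
      have hvm : ∀ m, v m = u (m + 1) - lam * u m := by
        intro m
        simp only [hv, map_sub, Polynomial.aeval_X, Polynomial.aeval_C,
          LinearMap.sub_apply, Pi.sub_apply]
        rw [Module.algebraMap_end_apply]
        rfl
      have hrecv : (Polynomial.aeval shOp q) v = 0 := by
        rw [hv, ← Module.End.mul_apply, ← map_mul, ← mul_comm (X - C lam) q, ← hq]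
        exact hrec
      -- decay of v
      have hshift_top : Tendsto (fun m : ℤ => u (m + 1)) atTop (nhds 0) :=
        htop.comp (tendsto_atTop_add_const_right atTop 1 tendsto_id)
      have hshift_bot : Tendsto (fun m : ℤ => u (m + 1)) atBot (nhds 0) :=
        hbot.comp (tendsto_atBot_add_const_right atBot 1 tendsto_id)
      have hvtop : Tendsto v atTop (nhds 0) := by
        have h := hshift_top.sub (htop.const_mul lam)
        rw [mul_zero, sub_zero] at h
        exact h.congr (fun m => (hvm m).symm)
      have hvbot : Tendsto v atBot (nhds 0) := by
        have h := hshift_bot.sub (hbot.const_mul lam)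
        rw [mul_zero, sub_zero] at h
        exact h.congr (fun m => (hvm m).symm)
      have hv0 : v = 0 := ih (n-1) (by omega) q hdq hq0 v hrecv hvtop hvbot
      have hstep : ∀ m : ℤ, u (m + 1) = lam * u m := by
        intro m
        have h := congrFun hv0 m
        rw [hvm m] at h
        simp only [Pi.zero_apply] at h
        linear_combination h
      have hnormtop : Tendsto (fun m => ‖u m‖) atTop (nhds 0) := by
        simpa using htop.norm
      have hnormbot : Tendsto (fun m => ‖u m‖) atBot (nhds 0) := by
        simpa using hbot.norm
      funext m₀
      rcases le_total ‖lam‖ 1 with hl | hl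
      · -- |u| antitone, use atBot
        have hanti : Antitone (fun m => ‖u m‖) := by
          apply antitone_int_of_succ_le
          intro m
          rw [hstep m, norm_mul]
          calc ‖lam‖ * ‖u m‖ ≤ 1 * ‖u m‖ :=
                mul_le_mul_of_nonneg_right hl (norm_nonneg _)
            _ = ‖u m‖ := one_mul _
        have hev : ∀ᶠ m in atBot, ‖u m₀‖ ≤ ‖u m‖ :=
          eventually_atBot.mpr ⟨m₀, fun m hm => hanti hm⟩
        have : ‖u m₀‖ ≤ 0 := ge_of_tendsto hnormbot hev
        simpa using norm_le_zero_iff.mp (le_antisymm this (norm_nonneg _) ▸ this)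
      · -- |u| monotone, use atTop
        have hmono : Monotone (fun m => ‖u m‖) := by
          apply monotone_int_of_le_succ
          intro m
          rw [hstep m, norm_mul]
          calc ‖u m‖ = 1 * ‖u m‖ := (one_mul _).symm
            _ ≤ ‖lam‖ * ‖u m‖ := mul_le_mul_of_nonneg_right hl (norm_nonneg _)
        have hev : ∀ᶠ m in atTop, ‖u m₀‖ ≤ ‖u m‖ :=
          eventually_atTop.mpr ⟨m₀, fun m hm => hmono hm⟩
        have : ‖u m₀‖ ≤ 0 := ge_of_tendsto hnormtop hev
        simpa using norm_le_zero_iff.mp (le_antisymm this (norm_nonneg _) ▸ this)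

theorem no_shiftable_kernel_on_real_line (φ : ℝ → ℝ)
    (hsmooth : ContDiff ℝ (⊤ : ℕ∞) φ)
    (hshift : ∃ (N : ℕ) (φs : Fin N → ℝ → ℝ) (c : ℝ → Fin N → ℝ),
      ∀ τ x : ℝ, φ (x - τ) = ∑ n, c τ n * φs n x)
    (hsymm : ∀ x : ℝ, φ (-x) = φ x)
    (hnonneg : ∀ x : ℝ, 0 ≤ φ x)
    (hunimodal : AntitoneOn φ (Set.Ici (0 : ℝ)))
    (hdecay : Filter.Tendsto φ Filter.atTop (nhds 0)) :
    ∀ x : ℝ, φ x = 0 := by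
  classical
  obtain ⟨N, φs, c, hc⟩ := hshift
  -- the N+1 translates f i are linearly dependent
  set f : Fin (N+1) → (ℝ → ℝ) := fun i => fun x => φ (x - i) with hf
  have hfmem : ∀ i, f i ∈ Submodule.span ℝ (Set.range φs) := by
    intro i
    have : f i = ∑ n, c i n • φs n := by
      funext x
      simp only [hf, Finset.sum_apply, Pi.smul_apply, smul_eq_mul]
      exact hc i x
    rw [this]
    exact Submodule.sum_mem _ (fun n _ => Submodule.smul_mem _ _
      (Submodule.subset_span ⟨n, rfl⟩))
  haveI := Classical.decEq (ℝ → ℝ)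
  haveI : Fintype ↑(Set.range φs) := Set.fintypeRange φs
  have hnli : ¬ LinearIndependent ℝ f := by
    intro hli
    haveI : FiniteDimensional ℝ (Submodule.span ℝ (Set.range φs)) :=
      FiniteDimensional.span_of_finite ℝ (Set.finite_range φs)
    set g : Fin (N+1) → (Submodule.span ℝ (Set.range φs)) := fun i => ⟨f i, hfmem i⟩ with hg
    have hlig : LinearIndependent ℝ g := by
      apply LinearIndependent.of_comp (Submodule.span ℝ (Set.range φs)).subtype
      convert hli
      rfl
    have h1 : N + 1 ≤ Module.finrank ℝ (Submodule.span ℝ (Set.range φs)) := by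
      simpa using hlig.fintype_card_le_finrank
    have h2 : Module.finrank ℝ (Submodule.span ℝ (Set.range φs)) ≤ N := by
      calc Module.finrank ℝ (Submodule.span ℝ (Set.range φs))
          ≤ (Set.range φs).toFinset.card := finrank_span_le_card (R := ℝ) (Set.range φs)
        _ ≤ Fintype.card (Fin N) := by
            rw [Set.toFinset_card]
            exact Fintype.card_range_le φs
        _ = N := by simp
    omega
  obtain ⟨a, hsum, i₀, hi₀⟩ := Fintype.not_linearIndependent_iff.mp hnli
  -- reversed coefficients: ∀ y, ∑ j, b j * φ (y + j) = 0
  set b : Fin (N+1) → ℝ := fun j => a j.rev with hb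
  have hrel : ∀ y : ℝ, ∑ j : Fin (N+1), b j * φ (y + j) = 0 := by
    intro y
    have h := congrFun hsum (y + N)
    simp only [Finset.sum_apply, Pi.smul_apply, hf, smul_eq_mul, Pi.zero_apply] at h
    rw [← h, ← Equiv.sum_comp (Fin.revPerm) (fun i => a i * φ (y + N - i))]
    apply Finset.sum_congr rfl
    intro j _
    simp only [hb, Fin.revPerm_apply]
    congr 1
    have hj : ((j.rev : ℕ) : ℝ) = (N : ℝ) - ((j : ℕ) : ℝ) := by
      rw [Fin.val_rev]
      have hle : (j : ℕ) ≤ N := Fin.is_le j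
      have : N + 1 - ((j : ℕ) + 1) = N - (j : ℕ) := by omega
      rw [this, Nat.cast_sub hle]
    rw [hj]
    ring_nf
  -- now the complex sequence argument, for each real x₀
  intro x₀
  set u : ℤ → ℂ := fun m => ((φ (x₀ + (m : ℝ)) : ℝ) : ℂ) with hu
  set p : Polynomial ℂ := ∑ j : Fin (N+1), Polynomial.monomial (j : ℕ) ((b j : ℝ) : ℂ) with hp
  have hcoeff : ∀ j₀ : Fin (N+1), p.coeff (j₀ : ℕ) = ((b j₀ : ℝ) : ℂ) := by
    intro j₀
    rw [hp, Polynomial.finset_sum_coeff]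
    simp only [Polynomial.coeff_monomial]
    rw [Finset.sum_eq_single j₀]
    · simp
    · intro j _ hne
      rw [if_neg (fun h => hne (Fin.val_injective h))]
    · intro h
      exact absurd (Finset.mem_univ j₀) h
  have hp0 : p ≠ 0 := by
    intro h
    have hb0 : b i₀.rev ≠ 0 := by
      simp only [hb, Fin.rev_rev]
      exact hi₀
    have := hcoeff i₀.rev
    rw [h, Polynomial.coeff_zero] at this
    exact hb0 (by exact_mod_cast this.symm)
  have hrecu : (Polynomial.aeval shOp p) u = 0 := by
    funext m
    rw [hp, map_sum]
    simp only [LinearMap.coe_sum, Finset.sum_apply, Pi.zero_apply]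
    have hterm : ∀ j : Fin (N+1),
        ((Polynomial.aeval shOp) (Polynomial.monomial (j : ℕ) ((b j : ℝ) : ℂ))) u m
          = ((b j : ℝ) : ℂ) * u (m + (j : ℕ)) := by
      intro j
      rw [Polynomial.aeval_monomial, Module.End.mul_apply, Module.algebraMap_end_apply]
      simp only [Pi.smul_apply, smul_eq_mul]
      rw [shOp_pow]
    rw [Finset.sum_congr rfl (fun j _ => hterm j)]
    have harg : ∀ j : Fin (N+1), u (m + (j : ℕ)) = ((φ ((x₀ + m) + (j : ℕ)) : ℝ) : ℂ) := by
      intro j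
      simp only [hu]
      norm_cast
      congr 1
      push_cast
      ring
    rw [Finset.sum_congr rfl (fun j _ => by rw [harg j])]
    have := hrel (x₀ + m)
    calc ∑ j : Fin (N+1), ((b j : ℝ) : ℂ) * ((φ ((x₀ + m) + (j : ℕ)) : ℝ) : ℂ)
        = (((∑ j : Fin (N+1), b j * φ ((x₀ + m) + (j : ℕ))) : ℝ) : ℂ) := by
          push_cast; ring_nf
      _ = 0 := by rw [this]; simp
  have hmap_top : Tendsto (fun m : ℤ => x₀ + (m : ℝ)) atTop atTop :=
    tendsto_atTop_add_const_left atTop x₀ tendsto_intCast_atTop_atTop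
  have hutop : Tendsto u atTop (nhds 0) := by
    have h := hdecay.comp hmap_top
    have := (Complex.continuous_ofReal.tendsto 0).comp h
    simpa [hu, Function.comp_def] using this
  have hmap_bot : Tendsto (fun m : ℤ => -(x₀ + (m : ℝ))) atBot atTop := by
    apply tendsto_neg_atBot_atTop.comp
    exact tendsto_atBot_add_const_left atBot x₀ (tendsto_intCast_atBot_iff.2 tendsto_id)
  have hubot : Tendsto u atBot (nhds 0) := by
    have h := hdecay.comp hmap_bot
    have h2 : Tendsto (fun m : ℤ => φ (x₀ + (m : ℝ))) atBot (nhds 0) :=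
      h.congr (fun m => hsymm (x₀ + (m : ℝ)))
    have := (Complex.continuous_ofReal.tendsto 0).comp h2
    simpa [hu, Function.comp_def] using this
  have hu0 : u = 0 := seq_zero_of_recurrence p.natDegree p rfl hp0 u hrecu hutop hubot
  have := congrFun hu0 0
  simp only [hu, Pi.zero_apply, Int.cast_zero, add_zero, Complex.ofReal_eq_zero] at this
  exact this
end

section
/- Let φ be shiftable on ℝ with φ(y − τ) = ∑_{n=1}^N c_n(τ)·φ_n(y) for all y, τ, and assume φ is even. Then for any integrable f and any x, ∫_{−T}^{T} φ(y)·f(x − y) dy = ∑_{n=1}^N c_n(x)·∫_{x−T}^{x+T} φ_n(u)·f(u) du. That is, the spatial filter at x is a linear combination, with coefficients c_n(x), of moving sums of the fixed functions φ_n·f over the window [x−T, x+T]. -/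
open Finset

theorem intervalIntegral.integral_finsetSum_const_mul {ι : Type*} (s : Finset ι) (w : ι → ℝ)
    (g : ι → ℝ → ℝ) {a b : ℝ} {μ : MeasureTheory.Measure ℝ}
    (hg : ∀ i ∈ s, IntervalIntegrable (g i) μ a b) :
    ∫ u in a..b, ∑ i ∈ s, w i * g i u ∂μ = ∑ i ∈ s, w i * ∫ u in a..b, g i u ∂μ := by
  rw [intervalIntegral.integral_finsetSum fun i hi => (hg i hi).const_mul (w i)]
  simp_rw [intervalIntegral.integral_const_mul]

theorem shift_expansion_of_even {ι : Type*} [Fintype ι] {φ : ℝ → ℝ} {φs : ι → ℝ → ℝ}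
    {c : ℝ → ι → ℝ} (hshift : ∀ τ y : ℝ, φ (y - τ) = ∑ n, c τ n * φs n y)
    (heven : ∀ y : ℝ, φ (-y) = φ y) (x u : ℝ) :
    φ (x - u) = ∑ n, c x n * φs n u := by
  rw [← heven, neg_sub, hshift]

theorem spatial_filter_moving_sum_general (T : ℝ) (N : ℕ)
    (φ : ℝ → ℝ) (φs : Fin N → ℝ → ℝ) (c : ℝ → Fin N → ℝ)
    (hshift : ∀ τ y : ℝ, φ (y - τ) = ∑ n, c τ n * φs n y)
    (heven : ∀ y : ℝ, φ (-y) = φ y)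
    (f : ℝ → ℝ)
    (x : ℝ)
    (hint : ∀ n, IntervalIntegrable (fun u => φs n u * f u)
      MeasureTheory.volume (x - T) (x + T)) :
    ∫ y in (-T)..T, φ y * f (x - y) =
      ∑ n, c x n * ∫ u in (x - T)..(x + T), φs n u * f u := by
  calc ∫ y in (-T)..T, φ y * f (x - y)
      = ∫ u in (x - T)..(x + T), φ (x - u) * f u := by
        simpa only [sub_neg_eq_add, sub_sub_cancel] using
          intervalIntegral.integral_comp_sub_left (fun u => φ (x - u) * f u) x (a := -T) (b := T)
    _ = ∫ u in (x - T)..(x + T), ∑ n, c x n * (φs n u * f u) := by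
        simp_rw [shift_expansion_of_even hshift heven x, sum_mul, mul_assoc]
    _ = ∑ n, c x n * ∫ u in (x - T)..(x + T), φs n u * f u :=
        intervalIntegral.integral_finsetSum_const_mul _ _ _ fun n _ => hint n

theorem spatial_filter_moving_sum (T : ℝ) (hT : 0 < T) (N : ℕ)
    (φ : ℝ → ℝ) (φs : Fin N → ℝ → ℝ) (c : ℝ → Fin N → ℝ)
    (hshift : ∀ τ y : ℝ, φ (y - τ) = ∑ n, c τ n * φs n y)
    (heven : ∀ y : ℝ, φ (-y) = φ y)
    (f : ℝ → ℝ) (hf : MeasureTheory.Integrable f)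
    (x : ℝ)
    (hint : ∀ n, IntervalIntegrable (fun u => φs n u * f u)
      MeasureTheory.volume (x - T) (x + T)) :
    ∫ y in (-T)..T, φ y * f (x - y) =
      ∑ n, c x n * ∫ u in (x - T)..(x + T), φs n u * f u :=
  spatial_filter_moving_sum_general T N φ φs c hshift heven f x hint
end

section
/- Let the range kernel φ be shiftable: φ(t − s) = ∑_{n=1}^N d_n(s)·φ_n(t) for all s, t. Then the bilateral-filter numerator satisfies, for every x: ∫_{−T}^{T} φ(f(x − y) − f(x))·f(x − y) dy = ∑_{n=1}^N d_n(f(x))·∫_{x−T}^{x+T} φ_n(f(u))·f(u) du. That is, the range-weighted sum equals a linear combination, with data-dependent coefficients d_n(f(x)), of moving sums of the fixed auxiliary images u ↦ φ_n(f(u))·f(u). -/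
open MeasureTheory

theorem intervalIntegral.integral_shiftable_kernel_mul {ι : Type*} [Fintype ι] {μ : Measure ℝ}
    {a b s : ℝ} {φ : ℝ → ℝ} {φs : ι → ℝ → ℝ} {c : ι → ℝ}
    (hshift : ∀ t, φ (t - s) = ∑ n, c n * φs n t) {g h : ℝ → ℝ}
    (hint : ∀ n, IntervalIntegrable (fun y => φs n (g y) * h y) μ a b) :
    ∫ y in a..b, φ (g y - s) * h y ∂μ = ∑ n, c n * ∫ y in a..b, φs n (g y) * h y ∂μ := by
  simp_rw [hshift, Finset.sum_mul, mul_assoc]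
  rw [intervalIntegral.integral_finsetSum fun n _ => (hint n).const_mul (c n)]
  simp_rw [intervalIntegral.integral_const_mul]

theorem bilateral_numerator_moving_sum_general (T : ℝ) (N : ℕ)
    (φ : ℝ → ℝ) (φs : Fin N → ℝ → ℝ) (d : ℝ → Fin N → ℝ)
    (hshift : ∀ s t : ℝ, φ (t - s) = ∑ n, d s n * φs n t)
    (f : ℝ → ℝ)
    (x : ℝ)
    (hint : ∀ n, IntervalIntegrable (fun u => φs n (f u) * f u)
      MeasureTheory.volume (x - T) (x + T)) :
    ∫ y in (-T)..T, φ (f (x - y) - f x) * f (x - y) =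
      ∑ n, d (f x) n * ∫ u in (x - T)..(x + T), φs n (f u) * f u := by
  have hwindow : ∀ n, IntervalIntegrable (fun y => φs n (f (x - y)) * f (x - y)) volume (-T) T :=
    fun n => by simpa using ((hint n).comp_sub_left x).symm
  rw [intervalIntegral.integral_shiftable_kernel_mul (hshift (f x)) hwindow]
  congr! 2 with n
  simpa using
    intervalIntegral.integral_comp_sub_left (fun u => φs n (f u) * f u) x (a := -T) (b := T)

theorem bilateral_numerator_moving_sum (T : ℝ) (hT : 0 < T) (N : ℕ)
    (φ : ℝ → ℝ) (φs : Fin N → ℝ → ℝ) (d : ℝ → Fin N → ℝ)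
    (hshift : ∀ s t : ℝ, φ (t - s) = ∑ n, d s n * φs n t)
    (f : ℝ → ℝ) (hf : Measurable f) (hbd : ∃ C : ℝ, ∀ x, |f x| ≤ C)
    (x : ℝ)
    (hint : ∀ n, IntervalIntegrable (fun u => φs n (f u) * f u)
      MeasureTheory.volume (x - T) (x + T)) :
    ∫ y in (-T)..T, φ (f (x - y) - f x) * f (x - y) =
      ∑ n, d (f x) n * ∫ u in (x - T)..(x + T), φs n (f u) * f u :=
  bilateral_numerator_moving_sum_general T N φ φs d hshift f x hint
end
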